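/- arXiv:1611.00934 — 2 statements merged into one kernel-verified Lean document; each statement's English description precedes it below -/
import Mathlib

section
/- For every integer k ≥ 5 and every deterministic online strategy A for exploring the ladder grid G_{2,4}, there exists a weighting w of G_{2,4} with weights in {1,k} such that OPT(w) = 8 and the cost of the exploration walk A(w) is at least 10; in particular, cost(A(w)) ≥ (5/4)·OPT(w), so no deterministic online strategy is strictly r-competitive for any r < 5/4 on G_{2,4}. -/
/-- Vertices are pairs of naturals (row, column). -/
abbrev V : Type := ℕ × ℕ

/-- Membership in the ladder grid `G_{2,n}`: row 1 or 2, column between 1 and n. -/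
def InLadder (n : ℕ) (v : V) : Prop :=
  (v.1 = 1 ∨ v.1 = 2) ∧ 1 ≤ v.2 ∧ v.2 ≤ n

/-- Adjacency in the ladder grid `G_{2,n}`: both endpoints in the grid and
L1-distance exactly 1. -/
def LadderAdj (n : ℕ) (u v : V) : Prop :=
  InLadder n u ∧ InLadder n v ∧
    ((u.1 = v.1 ∧ (u.2 + 1 = v.2 ∨ v.2 + 1 = u.2)) ∨
     (u.2 = v.2 ∧ (u.1 + 1 = v.1 ∨ v.1 + 1 = u.1)))

/-- A weighting of `G_{2,n}` with weights in `{1, k}`, given as a symmetric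
function on pairs of vertices. -/
def IsWeighting (n k : ℕ) (w : V → V → ℕ) : Prop :=
  (∀ u v, w u v = w v u) ∧ (∀ u v, LadderAdj n u v → w u v = 1 ∨ w u v = k)

/-- The cost of a walk (a list of vertices): sum of the weights of the traversed
edges, with multiplicity. -/
def walkCost (w : V → V → ℕ) (p : List V) : ℕ :=
  ((p.zip p.tail).map fun e => w e.1 e.2).sum

/-- A walk in `G_{2,n}` starting at `s`. -/
def IsWalkFrom (n : ℕ) (s : V) (p : List V) : Prop :=
  p.head? = some s ∧ p.Chain' (LadderAdj n)

/-- An exploration walk: a walk starting at `(1,1)` visiting every vertex of the ladder. -/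
def IsExploration (n : ℕ) (p : List V) : Prop :=
  IsWalkFrom n (1, 1) p ∧ ∀ v, InLadder n v → v ∈ p

/-- `OPT`: the minimum cost of an exploration walk of `G_{2,n}` under the weighting `w`. -/
noncomputable def OPT (n : ℕ) (w : V → V → ℕ) : ℕ :=
  sInf {c | ∃ p, IsExploration n p ∧ walkCost w p = c}

/-- A deterministic online strategy for exploring `G_{2,n}` with weights in `{1,k}`:
it outputs an exploration walk for every weighting, and if two weightings agree on
all edges incident to the first `t+1` visited vertices, then the first `t+2`
vertices of the corresponding walks coincide. -/
def OnlineStrategy (n k : ℕ) (A : (V → V → ℕ) → List V) : Prop :=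
  (∀ w, IsWeighting n k w → IsExploration n (A w)) ∧
  (∀ w w', IsWeighting n k w → IsWeighting n k w' → ∀ t : ℕ,
    (∀ u v, LadderAdj n u v →
      (u ∈ (A w).take (t + 1) ∨ v ∈ (A w).take (t + 1)) → w u v = w' u v) →
    (A w).take (t + 2) = (A w').take (t + 2))

/-!
The two adversary weightings below agree (with weight 1) on the edges at the start `(1,1)`, so
a deterministic strategy makes the same first move under both. Against a first move down to
`(2,1)` the adversary makes both edges from `(1,2)` into the rest of the ladder heavy, so
`(1,2)` is only cheaply reachable by returning through `(1,1)`; against a first move right to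
`(1,2)` it makes `(2,2)-(2,3)` and `(1,4)-(2,4)` heavy, so the bottom row needs a detour. In both
cases completing the exploration costs at least `9` more, while the optimum is `8`.

Each of these lower bounds on exploration costs is certified by `coverCostGe`, a
branch-and-bound search over walks that the kernel evaluates and whose soundness holds for
arbitrary weights and neighbour functions.
-/

/-- `coverCostGe w nbrs n b v S = true` certifies that every walk from `v` along `nbrs` visiting
all of `S` costs at least `b`; the search explores at most `n` steps and answers `false` when
this budget runs out. -/
def coverCostGe (w : V → V → ℕ) (nbrs : V → List V) : ℕ → ℕ → V → List V → Bool
  | _, 0, _, _ => true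
  | 0, _ + 1, _, _ => false
  | n + 1, b + 1, v, S =>
    let S' := S.filter (· ≠ v)
    !S'.isEmpty && (nbrs v).all fun u =>
      b + 1 ≤ w v u || coverCostGe w nbrs n (b + 1 - w v u) u S'

theorem walkCost_cons_cons (w : V → V → ℕ) (a b : V) (l : List V) :
    walkCost w (a :: b :: l) = w a b + walkCost w (b :: l) := by
  simp [walkCost]

theorem walkCost_mono {w w' : V → V → ℕ} (h : ∀ u v, w u v ≤ w' u v) (p : List V) :
    walkCost w p ≤ walkCost w' p :=
  List.sum_le_sum fun e _ => by simpa using h _ _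

theorem le_walkCost_of_coverCostGe {w : V → V → ℕ} {nbrs : V → List V}
    {R : V → V → Prop} (hR : ∀ {v u}, R v u → u ∈ nbrs v) (n : ℕ) :
    ∀ {b : ℕ} {v : V} {q S : List V}, coverCostGe w nbrs n b v S = true →
      (v :: q).IsChain R → (∀ x ∈ S, x ∈ v :: q) → b ≤ walkCost w (v :: q) := by
  induction n with
  | zero =>
    intro b v q S hcheck _ _
    cases b with
    | zero => exact Nat.zero_le _
    | succ b => simp [coverCostGe] at hcheck
  | succ n ih =>
    intro b v q S hcheck hchain hcover
    cases b with
    | zero => exact Nat.zero_le _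
    | succ b =>
      simp only [coverCostGe, Bool.and_eq_true, Bool.not_eq_true', List.isEmpty_eq_false_iff,
        List.all_eq_true, Bool.or_eq_true, decide_eq_true_eq] at hcheck
      obtain ⟨hS', hnext⟩ := hcheck
      obtain ⟨x, hx⟩ := List.exists_mem_of_ne_nil _ hS'
      rw [List.mem_filter, decide_eq_true_eq] at hx
      obtain ⟨u, q, rfl⟩ : ∃ u q', q = u :: q' := by
        cases q with
        | nil => simpa [hx.2] using hcover x hx.1
        | cons u q' => exact ⟨u, q', rfl⟩
      rw [List.isChain_cons_cons] at hchain
      rw [walkCost_cons_cons]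
      rcases hnext u (hR hchain.1) with hheavy | hrest
      · omega
      · have := ih hrest hchain.2 fun y hy => by
          rw [List.mem_filter, decide_eq_true_eq] at hy
          simpa [hy.2] using hcover y hy.1
        omega

instance (n : ℕ) (u v : V) : Decidable (LadderAdj n u v) :=
  inferInstanceAs (Decidable (((u.1 = 1 ∨ u.1 = 2) ∧ 1 ≤ u.2 ∧ u.2 ≤ n) ∧
    ((v.1 = 1 ∨ v.1 = 2) ∧ 1 ≤ v.2 ∧ v.2 ≤ n) ∧
    ((u.1 = v.1 ∧ (u.2 + 1 = v.2 ∨ v.2 + 1 = u.2)) ∨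
     (u.2 = v.2 ∧ (u.1 + 1 = v.1 ∨ v.1 + 1 = u.1)))))

def ladderVertices (n : ℕ) : List V :=
  (List.range' 1 n).flatMap fun c => [(1, c), (2, c)]

theorem mem_ladderVertices {n : ℕ} {v : V} : v ∈ ladderVertices n ↔ InLadder n v := by
  obtain ⟨a, c⟩ := v
  simp only [ladderVertices, InLadder, List.mem_flatMap, List.mem_range', List.mem_cons,
    List.not_mem_nil, Prod.mk.injEq, or_false]
  constructor
  · rintro ⟨c', ⟨i, hi, rfl⟩, (⟨rfl, rfl⟩ | ⟨rfl, rfl⟩)⟩ <;> omega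
  · rintro ⟨ha, hc1, hc2⟩
    exact ⟨c, ⟨c - 1, by omega, by omega⟩, by omega⟩

/-- For a vertex of `G_{2,n}` these are exactly its neighbours (`3 - v.1` is the other row). -/
def ladderNbrs (n : ℕ) (v : V) : List V :=
  (3 - v.1, v.2) :: ((if 1 < v.2 then [(v.1, v.2 - 1)] else []) ++
    (if v.2 < n then [(v.1, v.2 + 1)] else []))

theorem mem_ladderNbrs_of_ladderAdj {n : ℕ} {v u : V} (h : LadderAdj n v u) :
    u ∈ ladderNbrs n v := by
  obtain ⟨a, c⟩ := v
  obtain ⟨a', c'⟩ := u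
  simp only [LadderAdj, InLadder] at h
  simp only [ladderNbrs, List.mem_cons, List.mem_append, Prod.mk.injEq]
  split_ifs <;> simp <;> omega

theorem isExploration_iff {n : ℕ} {p : List V} :
    IsExploration n p ↔ p.head? = some (1, 1) ∧ p.IsChain (LadderAdj n) ∧
      ∀ v ∈ ladderVertices n, v ∈ p := by
  simp only [IsExploration, IsWalkFrom, mem_ladderVertices, and_assoc]
  rfl

namespace IsExploration

variable {n : ℕ} {p : List V}

theorem exists_eq_cons_cons (hp : IsExploration n p) (hn : 1 ≤ n) :
    ∃ u r, p = (1, 1) :: u :: r ∧ (u = (2, 1) ∨ u = (1, 2)) := by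
  obtain ⟨⟨hhead, hchain⟩, hcover⟩ := hp
  obtain ⟨q, rfl⟩ : ∃ q, p = (1, 1) :: q := List.head?_eq_some_iff.mp hhead
  obtain ⟨u, r, rfl⟩ : ∃ u r, q = u :: r := by
    cases q with
    | nil => simpa using hcover (2, 1) ⟨by decide, le_rfl, hn⟩
    | cons u r => exact ⟨u, r, rfl⟩
  refine ⟨u, r, rfl, ?_⟩
  have hu := mem_ladderNbrs_of_ladderAdj (List.isChain_cons_cons.mp hchain).1
  simp only [ladderNbrs] at hu
  split_ifs at hu <;> simp_all

theorem le_walkCost {w : V → V → ℕ} {m b : ℕ} (hp : IsExploration n p)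
    (hcheck : coverCostGe w (ladderNbrs n) m b (1, 1) (ladderVertices n) = true) :
    b ≤ walkCost w p := by
  obtain ⟨hhead, hchain, hcover⟩ := isExploration_iff.mp hp
  obtain ⟨q, rfl⟩ : ∃ q, p = (1, 1) :: q := List.head?_eq_some_iff.mp hhead
  exact le_walkCost_of_coverCostGe (R := LadderAdj n) mem_ladderNbrs_of_ladderAdj m hcheck hchain
    hcover

theorem le_walkCost_tail {w : V → V → ℕ} {m b : ℕ} {u : V} {r : List V}
    (hp : IsExploration n ((1, 1) :: u :: r))
    (hcheck : coverCostGe w (ladderNbrs n) m b u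
      ((ladderVertices n).filter (· ≠ (1, 1))) = true) :
    b ≤ walkCost w (u :: r) := by
  obtain ⟨-, hchain, hcover⟩ := isExploration_iff.mp hp
  refine le_walkCost_of_coverCostGe (R := LadderAdj n) mem_ladderNbrs_of_ladderAdj m hcheck
    hchain.tail fun x hx => ?_
  rw [List.mem_filter, decide_eq_true_eq] at hx
  simpa [hx.2] using hcover x hx.1

end IsExploration

theorem OPT_eq_walkCost {n : ℕ} {w : V → V → ℕ} {p : List V} (hp : IsExploration n p)
    (hmin : ∀ q, IsExploration n q → walkCost w p ≤ walkCost w q) :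
    OPT n w = walkCost w p :=
  le_antisymm (Nat.sInf_le ⟨p, hp, rfl⟩)
    (le_csInf ⟨_, p, hp, rfl⟩ fun _ ⟨q, hq, hc⟩ => hc ▸ hmin q hq)

theorem OnlineStrategy.take_two_eq {n k : ℕ} {A : (V → V → ℕ) → List V}
    (hA : OnlineStrategy n k A) {w w' : V → V → ℕ} (hw : IsWeighting n k w)
    (hw' : IsWeighting n k w') (hstart : ∀ v, w (1, 1) v = w' (1, 1) v) :
    (A w).take 2 = (A w').take 2 := by
  refine hA.2 w w' hw hw' 0 fun u v _ huv => ?_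
  have hhead : (A w).take 1 = [(1, 1)] := by
    rw [List.take_one, (hA.1 w hw).1.1]; rfl
  rw [hhead, List.mem_singleton, List.mem_singleton] at huv
  rcases huv with rfl | rfl
  · exact hstart v
  · rw [hw.1, hw'.1]; exact hstart u

theorem OnlineStrategy.exists_eq_cons_cons {n k : ℕ} {A : (V → V → ℕ) → List V}
    (hA : OnlineStrategy n k A) {w w' : V → V → ℕ} (hw : IsWeighting n k w)
    (hw' : IsWeighting n k w') (hstart : ∀ v, w (1, 1) v = w' (1, 1) v) {u : V} {r : List V}
    (hAw : A w = (1, 1) :: u :: r) : ∃ r', A w' = (1, 1) :: u :: r' := by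
  refine ⟨(A w').drop 2, ?_⟩
  rw [← List.take_append_drop 2 (A w'), ← hA.take_two_eq hw hw' hstart, hAw]
  simp

def heavyWeighting (k : ℕ) (H : List (V × V)) (u v : V) : ℕ :=
  if (u, v) ∈ H ∨ (v, u) ∈ H then k else 1

theorem isWeighting_heavyWeighting (n k : ℕ) (H : List (V × V)) :
    IsWeighting n k (heavyWeighting k H) := by
  refine ⟨fun u v => ?_, fun u v _ => ?_⟩ <;> unfold heavyWeighting
  · simp only [or_comm]
  · split_ifs <;> simp

theorem walkCost_heavyWeighting_mono {k k' : ℕ} (hk : k ≤ k') (H : List (V × V))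
    (p : List V) : walkCost (heavyWeighting k H) p ≤ walkCost (heavyWeighting k' H) p :=
  walkCost_mono (fun u v => by unfold heavyWeighting; split_ifs <;> omega) p

def wDown (k : ℕ) : V → V → ℕ := heavyWeighting k [((1, 2), (1, 3)), ((1, 2), (2, 2))]

def wRight (k : ℕ) : V → V → ℕ := heavyWeighting k [((2, 2), (2, 3)), ((1, 4), (2, 4))]

theorem wDown_start (k : ℕ) (v : V) : wDown k (1, 1) v = 1 := by
  simp [wDown, heavyWeighting]

theorem wRight_start (k : ℕ) (v : V) : wRight k (1, 1) v = 1 := by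
  simp [wRight, heavyWeighting]

theorem OPT_heavyWeighting_eq {n k₀ k m b : ℕ} {H : List (V × V)} {p : List V}
    (hk : k₀ ≤ k) (hp : IsExploration n p) (hcost : walkCost (heavyWeighting k H) p = b)
    (hcheck : coverCostGe (heavyWeighting k₀ H) (ladderNbrs n) m b (1, 1) (ladderVertices n)) :
    OPT n (heavyWeighting k H) = b :=
  hcost ▸ OPT_eq_walkCost hp fun _ hq =>
    hcost ▸ (hq.le_walkCost hcheck).trans (walkCost_heavyWeighting_mono hk H _)

theorem OPT_wDown {k : ℕ} (hk : 5 ≤ k) : OPT 4 (wDown k) = 8 :=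
  OPT_heavyWeighting_eq (m := 8) hk
    (p := [(1, 1), (1, 2), (1, 1), (2, 1), (2, 2), (2, 3), (2, 4), (1, 4), (1, 3)])
    (isExploration_iff.mpr (by decide)) (by simp [walkCost, heavyWeighting]) (by decide +kernel)

theorem OPT_wRight {k : ℕ} (hk : 5 ≤ k) : OPT 4 (wRight k) = 8 :=
  OPT_heavyWeighting_eq (m := 8) hk
    (p := [(1, 1), (2, 1), (2, 2), (1, 2), (1, 3), (1, 4), (1, 3), (2, 3), (2, 4)])
    (isExploration_iff.mpr (by decide)) (by simp [walkCost, heavyWeighting]) (by decide +kernel)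

theorem nine_le_walkCost_wDown_tail {k : ℕ} (hk : 5 ≤ k) {r : List V}
    (hp : IsExploration 4 ((1, 1) :: (2, 1) :: r)) : 9 ≤ walkCost (wDown k) ((2, 1) :: r) :=
  (hp.le_walkCost_tail (w := wDown 5) (m := 9) (by decide +kernel)).trans
    (walkCost_heavyWeighting_mono hk _ _)

theorem nine_le_walkCost_wRight_tail {k : ℕ} (hk : 5 ≤ k) {r : List V}
    (hp : IsExploration 4 ((1, 1) :: (1, 2) :: r)) : 9 ≤ walkCost (wRight k) ((1, 2) :: r) :=
  (hp.le_walkCost_tail (w := wRight 5) (m := 9) (by decide +kernel)).trans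
    (walkCost_heavyWeighting_mono hk _ _)

/-- Lower bound of 5/4 on the strict competitive ratio on `G_{2,4}`:
for every `k ≥ 5` and every deterministic online strategy, there is a weighting
with `OPT = 8` on which the strategy pays at least `10`. -/
theorem ladder_2_4_lower_bound (k : ℕ) (hk : 5 ≤ k)
    (A : (V → V → ℕ) → List V) (hA : OnlineStrategy 4 k A) :
    ∃ w : V → V → ℕ, IsWeighting 4 k w ∧ OPT 4 w = 8 ∧
      10 ≤ walkCost w (A w) := by
  have hwDown : IsWeighting 4 k (wDown k) := isWeighting_heavyWeighting 4 k _
  have hwRight : IsWeighting 4 k (wRight k) := isWeighting_heavyWeighting 4 k _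
  obtain ⟨u, r, hAu, rfl | rfl⟩ := (hA.1 _ hwDown).exists_eq_cons_cons (by norm_num)
  · refine ⟨wDown k, hwDown, OPT_wDown hk, ?_⟩
    have := nine_le_walkCost_wDown_tail hk (hAu ▸ hA.1 _ hwDown)
    rw [hAu, walkCost_cons_cons, wDown_start]
    omega
  · obtain ⟨r', hAr'⟩ := hA.exists_eq_cons_cons hwDown hwRight
      (fun v => (wDown_start k v).trans (wRight_start k v).symm) hAu
    refine ⟨wRight k, hwRight, OPT_wRight hk, ?_⟩
    have := nine_le_walkCost_wRight_tail hk (hAr' ▸ hA.1 _ hwRight)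
    rw [hAr', walkCost_cons_cons, wRight_start]
    omega
end

section
/- Fix an integer k ≥ 5. There exists a constant α ≥ 0 (possibly depending on k but not on n) such that for every n ≥ 1 there is a deterministic online strategy A_n for exploring the ladder grid G_{2,n} satisfying cost(A_n(w)) ≤ 4·OPT(w) + α for every weighting w of G_{2,n} with weights in {1,k}. That is, there is a 4-competitive deterministic online algorithm for exploring weighted ladder grids with weights in {1,k}. -/
/-!
The strategy explores the light components (maximal subgraphs connected by edges of weight 1)
one at a time. In a component it first runs a depth-first search along light edges to
unvisited vertices; once this search has returned, the component is completely known, and a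
second depth-first search over it takes every heavy edge to an unvisited vertex ("dive"),
explores the new component in the same way and comes back over the same heavy edge. Each vertex
costs at most 2 in each search and each dive costs 2k, so the walk costs at most
`8n - 4 + 2k d` after `d` dives. The `d + 1` components entered are pairwise distinct, so every
exploration walk has at least `2n - 1` steps, at least `d` of them heavy, and costs at least
`2n - 1 + (k - 1) d`; as `2k ≤ 4 (k - 1)`, this gives the factor 4 with `α = 0`.
-/

open Relation

section General

variable {α : Type*} {r : α → α → Prop}

theorem mem_of_reflTransGen {S : Set α} (hS : ∀ x ∈ S, ∀ y, r x y → y ∈ S) {x y : α}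
    (hxy : ReflTransGen r x y) (hx : x ∈ S) : y ∈ S := by
  induction hxy with
  | refl => exact hx
  | tail _ hyz ih => exact hS _ ih _ hyz

theorem card_le_one_of_forall_reflTransGen [Std.Symm r] {R : Finset α} {a : α}
    (hR : (R : Set α).Pairwise fun x y => ¬ ReflTransGen r x y)
    (ha : ∀ x ∈ R, ReflTransGen r x a) : R.card ≤ 1 :=
  Finset.card_le_one.2 fun x hx y hy => by
    by_contra hxy
    exact hR hx hy hxy ((ha x hx).trans (Std.Symm.symm _ _ (ha y hy)))

variable (r) [DecidableRel r]

def chainBreaks : List α → ℕ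
  | a :: b :: l => (if r a b then 0 else 1) + chainBreaks (b :: l)
  | _ => 0

variable {r}

theorem card_le_chainBreaks_add_one [Std.Symm r] {a : α} {l : List α} {R : Finset α}
    (hR : (R : Set α).Pairwise fun x y => ¬ ReflTransGen r x y)
    (hcov : ∀ x ∈ R, ∃ y ∈ a :: l, ReflTransGen r x y) :
    R.card ≤ chainBreaks r (a :: l) + 1 := by
  induction l generalizing a R with
  | nil =>
    refine card_le_one_of_forall_reflTransGen (a := a) hR fun x hx => ?_
    obtain ⟨y, hy, hxy⟩ := hcov x hx
    rwa [List.mem_singleton.1 hy] at hxy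
  | cons b l ih =>
    classical
    set P : α → Prop := fun x => ∃ y ∈ b :: l, ReflTransGen r x y
    have hsub (Q : α → Prop) [DecidablePred Q] : ((R.filter Q : Finset α) : Set α) ⊆ R :=
      Finset.coe_subset.2 (Finset.filter_subset _ _)
    have hfar : ∀ x ∈ R.filter (¬ P ·), ReflTransGen r x a := fun x hx => by
      obtain ⟨hxR, hxP⟩ := Finset.mem_filter.1 hx
      obtain ⟨y, hy, hxy⟩ := hcov x hxR
      rcases List.mem_cons.1 hy with rfl | hy
      · exact hxy
      · exact absurd ⟨y, hy, hxy⟩ hxP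
    have hnear : (R.filter P).card ≤ chainBreaks r (b :: l) + 1 :=
      ih (hR.mono (hsub P)) fun x hx => (Finset.mem_filter.1 hx).2
    have hsplit := Finset.card_filter_add_card_filter_not (s := R) P
    have hfar_card : (R.filter (¬ P ·)).card ≤ if r a b then 0 else 1 := by
      split_ifs with hab
      · refine Nat.le_zero.2 (Finset.card_eq_zero.2 (Finset.filter_eq_empty_iff.2 ?_))
        exact fun x hx hxP =>
          hxP ⟨b, List.mem_cons_self, (hfar x (Finset.mem_filter.2 ⟨hx, hxP⟩)).tail hab⟩
      · exact card_le_one_of_forall_reflTransGen (hR.mono (hsub _)) hfar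
    simp only [chainBreaks]
    omega

theorem take_eq_of_prefix {l₁ l₂ : List α} {t : ℕ} (h : l₁ <+: l₂)
    (ht : t ≤ l₁.length) : l₂.take t = l₁.take t := by
  obtain ⟨r, rfl⟩ := h
  exact List.take_append_of_le_length ht

theorem take_iterate_eq {S : Type*} {f g : S → S} {tr : S → List α}
    (hf : ∀ s, tr s <+: tr (f s)) (hg : ∀ s, tr s <+: tr (g s)) {s : S} {t N : ℕ}
    (hfg : ∀ m < N, (tr (f^[m] s)).length ≤ t + 1 → f (f^[m] s) = g (f^[m] s)) :
    (tr (f^[N] s)).take (t + 2) = (tr (g^[N] s)).take (t + 2) := by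
  have hlong {x y : S} (hx : t + 2 ≤ (tr x).length) (hy : t + 2 ≤ (tr y).length)
      (hxy : (tr x).take (t + 2) = (tr y).take (t + 2)) :
      t + 2 ≤ (tr (f x)).length ∧ t + 2 ≤ (tr (g y)).length ∧
        (tr (f x)).take (t + 2) = (tr (g y)).take (t + 2) :=
    ⟨hx.trans (hf x).length_le, hy.trans (hg y).length_le,
      by rw [take_eq_of_prefix (hf x) hx, take_eq_of_prefix (hg y) hy, hxy]⟩
  suffices h : f^[N] s = g^[N] s ∨ (t + 2 ≤ (tr (f^[N] s)).length ∧
      t + 2 ≤ (tr (g^[N] s)).length ∧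
        (tr (f^[N] s)).take (t + 2) = (tr (g^[N] s)).take (t + 2)) by
    rcases h with h | h
    · rw [h]
    · exact h.2.2
  induction N with
  | zero => exact .inl rfl
  | succ N ih =>
    rw [Function.iterate_succ_apply', Function.iterate_succ_apply']
    rcases ih fun m hm => hfg m (by omega) with h | ⟨hx, hy, hxy⟩
    · by_cases hlen : (tr (f^[N] s)).length ≤ t + 1
      · exact .inl (by rw [hfg N (by omega) hlen, h])
      · rw [← h]
        exact .inr (hlong (by omega) (by omega) rfl)
    · exact .inr (hlong hx hy hxy)

end General

instance (n : ℕ) : DecidablePred (InLadder n) := fun _ => by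
  unfold InLadder; infer_instance

instance (n : ℕ) : DecidableRel (LadderAdj n) := fun _ _ => by
  unfold LadderAdj; infer_instance

theorem LadderAdj.symm {n : ℕ} {u v : V} (h : LadderAdj n u v) : LadderAdj n v u := by
  obtain ⟨hu, hv, h⟩ := h
  exact ⟨hv, hu, by omega⟩

theorem isWalkFrom_concat {n : ℕ} {s v : V} {l : List V} (h : IsWalkFrom n s l)
    (hv : ∀ u ∈ l.getLast?, LadderAdj n u v) : IsWalkFrom n s (l ++ [v]) := by
  obtain ⟨hhead, hchain⟩ := h
  have hne : l ≠ [] := by rintro rfl; cases hhead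
  exact ⟨by rwa [List.head?_append_of_ne_nil _ hne],
    List.IsChain.append hchain (List.isChain_singleton v) (by simpa using hv)⟩

namespace LadderExploration

def neighbors (n : ℕ) (u : V) : List V :=
  [(u.1, u.2 + 1), (u.1, u.2 - 1), (3 - u.1, u.2)].filter (LadderAdj n u ·)

theorem mem_neighbors {n : ℕ} {u v : V} : v ∈ neighbors n u ↔ LadderAdj n u v := by
  refine ⟨fun h => of_decide_eq_true (List.mem_filter.1 h).2, fun h => ?_⟩
  refine List.mem_filter.2 ⟨?_, decide_eq_true h⟩
  obtain ⟨⟨hu, -⟩, ⟨hv, -⟩, hc⟩ := h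
  obtain ⟨a, b⟩ := u
  obtain ⟨c, d⟩ := v
  simp only [List.mem_cons, Prod.mk.injEq] at *
  omega

theorem length_neighbors_le (n : ℕ) (u : V) : (neighbors n u).length ≤ 3 :=
  (List.length_filter_le _ _).trans (by simp)

def vertices (n : ℕ) : Finset V := ({1, 2} : Finset ℕ) ×ˢ Finset.Icc 1 n

theorem mem_vertices {n : ℕ} {v : V} : v ∈ vertices n ↔ InLadder n v := by
  simp [vertices, InLadder]

theorem card_vertices (n : ℕ) : (vertices n).card = 2 * n := by
  simp [vertices, Finset.card_product]

theorem card_le_of_forall_inLadder {n : ℕ} {s : Finset V} (hs : ∀ v ∈ s, InLadder n v) :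
    s.card ≤ 2 * n :=
  card_vertices n ▸ Finset.card_le_card fun v hv => mem_vertices.2 (hs v hv)

theorem reflTransGen_ladderAdj {n : ℕ} {v : V} (hv : InLadder n v) :
    ReflTransGen (LadderAdj n) (1, 1) v := by
  have hrow : ∀ j, 1 ≤ j → j ≤ n → ReflTransGen (LadderAdj n) (1, 1) (1, j) := by
    intro j hj hjn
    induction j, hj using Nat.le_induction with
    | base => rfl
    | succ j hj ih =>
      exact (ih (by omega)).tail
        ⟨⟨by simp, hj, by omega⟩, ⟨by simp, by omega, hjn⟩, by simp⟩
  obtain ⟨i, j⟩ := v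
  obtain ⟨hi, hj, hjn⟩ := hv
  rcases hi with rfl | rfl
  · exact hrow j hj hjn
  · exact (hrow j hj hjn).tail ⟨⟨by simp, hj, hjn⟩, ⟨by simp, hj, hjn⟩, by simp⟩

theorem walkCost_cons_cons (w : V → V → ℕ) (a b : V) (l : List V) :
    walkCost w (a :: b :: l) = w a b + walkCost w (b :: l) := rfl

theorem walkCost_append_cons (w : V → V → ℕ) (l₁ : List V) (a : V) (l₂ : List V) :
    walkCost w (l₁ ++ a :: l₂) = walkCost w (l₁ ++ [a]) + walkCost w (a :: l₂) := by
  induction l₁ with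
  | nil => simp [walkCost]
  | cons b l₁ ih =>
    rcases l₁ with _ | ⟨c, l₁⟩
    · simp [walkCost]
    · simp only [List.cons_append, walkCost_cons_cons] at ih ⊢
      omega

theorem walkCost_reverse {w : V → V → ℕ} (hw : ∀ u v, w u v = w v u) (l : List V) :
    walkCost w l.reverse = walkCost w l := by
  induction l with
  | nil => rfl
  | cons a l ih =>
    rcases l with _ | ⟨b, l⟩
    · rfl
    · rw [List.reverse_cons, List.reverse_cons, List.append_assoc, List.singleton_append,
        walkCost_append_cons, ← List.reverse_cons, ih, walkCost_cons_cons, walkCost_cons_cons, hw]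
      simp [walkCost, Nat.add_comm]

def light (n : ℕ) (w : V → V → ℕ) (u v : V) : Prop := LadderAdj n u v ∧ w u v = 1

instance (n : ℕ) (w : V → V → ℕ) : DecidableRel (light n w) := fun _ _ => instDecidableAnd

section LowerBound

variable {n k : ℕ} {w : V → V → ℕ}

theorem light_symm (hw : IsWeighting n k w) : Std.Symm (light n w) :=
  ⟨fun _ _ h => ⟨h.1.symm, hw.1 _ _ ▸ h.2⟩⟩

theorem walkCost_eq_of_isChain (hw : IsWeighting n k w) (hk : 1 ≤ k) {a : V} {l : List V}
    (hl : (a :: l).IsChain (LadderAdj n)) :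
    walkCost w (a :: l) = l.length + (k - 1) * chainBreaks (light n w) (a :: l) := by
  induction l generalizing a with
  | nil => rfl
  | cons b l ih =>
    obtain ⟨hab, hl⟩ := List.isChain_cons_cons.1 hl
    rw [walkCost_cons_cons, ih hl, chainBreaks, List.length_cons, mul_add]
    by_cases h1 : w a b = 1
    · rw [if_pos ⟨hab, h1⟩]
      omega
    · rw [if_neg fun h => h1 h.2, (hw.2 a b hab).resolve_left h1]
      omega

theorem le_walkCost_of_isExploration (hw : IsWeighting n k w) (hk : 1 ≤ k) {q : List V}
    (hq : IsExploration n q) {R : Finset V}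
    (hR : (R : Set V).Pairwise fun x y => ¬ ReflTransGen (light n w) x y)
    (hRn : ∀ x ∈ R, InLadder n x) :
    2 * n - 1 + (k - 1) * (R.card - 1) ≤ walkCost w q := by
  have := light_symm hw
  obtain ⟨⟨hhead, hchain⟩, hcov⟩ := hq
  rcases q with _ | ⟨a, l⟩
  · cases hhead
  have hlen : 2 * n ≤ l.length + 1 :=
    calc 2 * n = (vertices n).card := (card_vertices n).symm
      _ ≤ (a :: l).toFinset.card := Finset.card_le_card fun v hv =>
          List.mem_toFinset.2 (hcov v (mem_vertices.1 hv))
      _ ≤ l.length + 1 := List.toFinset_card_le _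
  have hbreaks : R.card ≤ chainBreaks (light n w) (a :: l) + 1 :=
    card_le_chainBreaks_add_one hR fun x hx => ⟨x, hcov x (hRn x hx), .refl⟩
  rw [walkCost_eq_of_isChain hw hk hchain]
  exact add_le_add (by omega) (Nat.mul_le_mul_left _ (by omega))

theorem le_mul_OPT {c m : ℕ} (hne : ∃ p, IsExploration n p)
    (h : ∀ p, IsExploration n p → c ≤ m * walkCost w p) : c ≤ m * OPT n w := by
  obtain ⟨p, hp⟩ := hne
  obtain ⟨q, hq, hcost⟩ : OPT n w ∈ {c | ∃ p, IsExploration n p ∧ walkCost w p = c} :=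
    Nat.sInf_mem ⟨_, p, hp, rfl⟩
  rw [← hcost]
  exact h q hq

end LowerBound

/-- A pending call of depth-first search at `vert`: `todo` lists the neighbours still to be
scanned and `back` the vertex to return to when the call ends (`none` at the start of a
component). The first search (`sweeping = false`) follows light edges to unvisited vertices;
the second (`sweeping = true`) re-traverses the component and dives along heavy edges. -/
structure Frame where
  sweeping : Bool
  vert : V
  back : Option V
  todo : List V

/-- `walk` is the walk so far in reverse order, so that its head is the current position.
`roots` records the vertex at which each component was entered; it is never read by `step`. -/
structure State where
  walk : List V
  swept : Finset V
  roots : Finset V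
  stack : List Frame

section Algorithm

variable (n : ℕ) (w : V → V → ℕ)

def step (σ : State) : State :=
  match σ.stack with
  | [] => σ
  | ⟨_, _, back, []⟩ :: rest => { σ with walk := back.toList ++ σ.walk, stack := rest }
  | ⟨false, u, back, v :: todo⟩ :: rest =>
    if v ∉ σ.walk ∧ w u v = 1 then
      { σ with
        walk := v :: σ.walk
        stack := ⟨false, v, some u, neighbors n v⟩ :: ⟨false, u, back, todo⟩ :: rest }
    else { σ with stack := ⟨false, u, back, todo⟩ :: rest }
  | ⟨true, u, back, v :: todo⟩ :: rest =>
    if w u v = 1 ∧ v ∈ σ.walk ∧ v ∉ σ.swept then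
      { σ with
        walk := v :: σ.walk
        swept := insert v σ.swept
        stack := ⟨true, v, some u, neighbors n v⟩ :: ⟨true, u, back, todo⟩ :: rest }
    else if w u v ≠ 1 ∧ v ∉ σ.walk then
      { walk := v :: σ.walk
        swept := insert v σ.swept
        roots := insert v σ.roots
        stack := ⟨false, v, none, neighbors n v⟩ :: ⟨true, v, some u, neighbors n v⟩ ::
          ⟨true, u, back, todo⟩ :: rest }
    else { σ with stack := ⟨true, u, back, todo⟩ :: rest }

def init : State where
  walk := [(1, 1)]
  swept := {(1, 1)}
  roots := {(1, 1)}
  stack := [⟨false, (1, 1), none, neighbors n (1, 1)⟩,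
    ⟨true, (1, 1), none, neighbors n (1, 1)⟩]

def Frame.size (F : Frame) : ℕ := 2 * F.todo.length + 1

/-- A move adds at most two frames of size at most `7` and, if it does, also a vertex to
`walk` or to `swept`; hence the weight `10`. -/
def potential (σ : State) : ℕ :=
  10 * (2 * n - σ.walk.toFinset.card) + 10 * (2 * n - σ.swept.card) +
    (σ.stack.map Frame.size).sum

def explore : List V := ((step n w)^[potential n (init n)] (init n)).walk.reverse

end Algorithm

section Step

variable {n : ℕ} {w : V → V → ℕ}

theorem step_of_stack_eq_nil {σ : State} (hs : σ.stack = []) : step n w σ = σ := by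
  rw [step, hs]

theorem walk_reverse_prefix_step (n : ℕ) (w : V → V → ℕ) (σ : State) :
    σ.walk.reverse <+: (step n w σ).walk.reverse := by
  rw [List.reverse_prefix]
  unfold step
  split
  · exact List.suffix_refl _
  · exact List.suffix_append _ _
  all_goals split_ifs <;> first | exact List.suffix_refl _ | exact List.suffix_cons _ _

theorem walk_reverse_prefix_iterate (n : ℕ) (w : V → V → ℕ) (σ : State) (m : ℕ) :
    σ.walk.reverse <+: ((step n w)^[m] σ).walk.reverse :=
  Function.Iterate.rec (fun σ' : State => σ.walk.reverse <+: σ'.walk.reverse)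
    (List.prefix_refl _) (fun _ h => h.trans (walk_reverse_prefix_step n w _)) m

end Step

def Frame.debt (w : V → V → ℕ) (F : Frame) : ℕ := F.back.elim 0 (w F.vert)

def FrameOK (n : ℕ) (F : Frame) : Prop :=
  (∀ v ∈ F.todo, LadderAdj n F.vert v) ∧ ∀ x ∈ F.back, LadderAdj n F.vert x

/-- The walker stands at `p` while the top frame of the stack is active, and at
`F.back.getD F.vert` after a frame `F` has been popped. -/
def StackOK (n : ℕ) : List Frame → V → Prop
  | [], _ => True
  | F :: rest, p => F.vert = p ∧ FrameOK n F ∧ StackOK n rest (F.back.getD F.vert)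

def Pending (s : List Frame) (b : Bool) (u v : V) : Prop :=
  ∃ F ∈ s, F.sweeping = b ∧ F.vert = u ∧ v ∈ F.todo

def Done (w : V → V → ℕ) (σ : State) : Bool → V → V → Prop
  | false, u, v => w u v = 1 → v ∈ σ.walk
  | true, u, v => v ∈ σ.walk ∧ (w u v = 1 → v ∈ σ.swept)

structure WellFormed (n : ℕ) (σ : State) : Prop where
  isWalk : IsWalkFrom n (1, 1) σ.walk.reverse
  inLadder : ∀ v ∈ σ.walk, InLadder n v
  swept_sub : ∀ v ∈ σ.swept, v ∈ σ.walk
  roots_sub : σ.roots ⊆ σ.swept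
  stackOK : StackOK n σ.stack (σ.walk.headD (1, 1))
  back_mem : ∀ x, some x ∈ σ.stack.map Frame.back → x ∈ σ.walk
  phases : σ.stack.Pairwise fun F G => F.sweeping → G.sweeping

structure Invariant (n k : ℕ) (w : V → V → ℕ) (σ : State) : Prop
    extends WellFormed n σ where
  grow_closed : ∀ u ∈ σ.walk, ∀ v, LadderAdj n u v →
    Done w σ false u v ∨ Pending σ.stack false u v
  sweep_closed : ∀ u ∈ σ.swept, ∀ v, LadderAdj n u v →
    Done w σ true u v ∨ Pending σ.stack true u v
  roots_cover : ∀ u ∈ σ.walk, ∃ x ∈ σ.roots, ReflTransGen (light n w) x u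
  roots_pairwise : (σ.roots : Set V).Pairwise fun x y => ¬ ReflTransGen (light n w) x y
  /-- Every vertex pays `2` for the edge into it and back in each search, every dive `2k`;
  `debt` is the cost of the returns still to come. -/
  ledger : walkCost w σ.walk + (σ.stack.map (Frame.debt w)).sum + 4 + 2 * k ≤
    2 * σ.walk.toFinset.card + 2 * σ.swept.card + 2 * k * σ.roots.card

/-- The moves `step` makes from a state satisfying the invariant (`Invariant.move_step`), so
that the case analysis of `step` is done once. -/
inductive Move (n : ℕ) (w : V → V → ℕ) (σ : State) : State → Prop
  | pop {b u back rest} : σ.stack = ⟨b, u, back, []⟩ :: rest →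
      Move n w σ { σ with walk := back.toList ++ σ.walk, stack := rest }
  | grow {u back v todo rest} : σ.stack = ⟨false, u, back, v :: todo⟩ :: rest →
      v ∉ σ.walk → w u v = 1 →
      Move n w σ { σ with
        walk := v :: σ.walk
        stack := ⟨false, v, some u, neighbors n v⟩ :: ⟨false, u, back, todo⟩ :: rest }
  | sweep {u back v todo rest} : σ.stack = ⟨true, u, back, v :: todo⟩ :: rest →
      w u v = 1 → v ∈ σ.walk → v ∉ σ.swept →
      Move n w σ { σ with
        walk := v :: σ.walk
        swept := insert v σ.swept
        stack := ⟨true, v, some u, neighbors n v⟩ :: ⟨true, u, back, todo⟩ :: rest }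
  | dive {u back v todo rest} : σ.stack = ⟨true, u, back, v :: todo⟩ :: rest →
      w u v ≠ 1 → v ∉ σ.walk →
      Move n w σ {
        walk := v :: σ.walk
        swept := insert v σ.swept
        roots := insert v σ.roots
        stack := ⟨false, v, none, neighbors n v⟩ :: ⟨true, v, some u, neighbors n v⟩ ::
          ⟨true, u, back, todo⟩ :: rest }
  | skip {b u back v todo rest} : σ.stack = ⟨b, u, back, v :: todo⟩ :: rest →
      Done w σ b u v → Move n w σ { σ with stack := ⟨b, u, back, todo⟩ :: rest }

theorem Move.walk_suffix {n : ℕ} {w : V → V → ℕ} {σ σ' : State} (hm : Move n w σ σ') :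
    σ.walk <:+ σ'.walk := by
  cases hm with
  | pop => exact List.suffix_append _ _
  | grow | sweep | dive => exact List.suffix_cons _ _
  | skip => exact List.suffix_refl _

theorem pending_cons {F : Frame} {s : List Frame} {b : Bool} {u v : V} :
    Pending (F :: s) b u v ↔
      (F.sweeping = b ∧ F.vert = u ∧ v ∈ F.todo) ∨ Pending s b u v := by
  simp [Pending]

theorem pending_of_pop {b b' : Bool} {u u' v' : V} {back : Option V} {rest : List Frame}
    (h : Pending (⟨b, u, back, []⟩ :: rest) b' u' v') : Pending rest b' u' v' := by
  rcases pending_cons.1 h with ⟨-, -, h⟩ | h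
  · cases h
  · exact h

theorem Done.mono {w : V → V → ℕ} {σ σ' : State} (hwalk : ∀ x ∈ σ.walk, x ∈ σ'.walk)
    (hswept : σ.swept ⊆ σ'.swept) {b : Bool} {u v : V} (h : Done w σ b u v) :
    Done w σ' b u v := by
  cases b
  · exact fun h1 => hwalk v (h h1)
  · exact ⟨hwalk v h.1, fun h1 => hswept (h.2 h1)⟩

theorem done_or_pending_of_advance {w : V → V → ℕ} {σ σ' : State} {b b' : Bool}
    {u u' v v' : V} {back : Option V} {todo : List V} {rest : List Frame}
    (hwalk : ∀ x ∈ σ.walk, x ∈ σ'.walk) (hswept : σ.swept ⊆ σ'.swept)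
    (hs : σ.stack = ⟨b, u, back, v :: todo⟩ :: rest)
    (hs' : (⟨b, u, back, todo⟩ :: rest : List Frame) ⊆ σ'.stack) (hdone : Done w σ' b u v)
    (h : Done w σ b' u' v' ∨ Pending σ.stack b' u' v') :
    Done w σ' b' u' v' ∨ Pending σ'.stack b' u' v' := by
  rcases h with h | h
  · exact .inl (h.mono hwalk hswept)
  rw [hs, pending_cons] at h
  rcases h with ⟨rfl, rfl, hv'⟩ | ⟨F, hF, hF'⟩
  · rcases List.mem_cons.1 hv' with rfl | hv'
    · exact .inl hdone
    · exact .inr ⟨_, hs' List.mem_cons_self, rfl, rfl, hv'⟩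
  · exact .inr ⟨F, hs' (List.mem_cons_of_mem _ hF), hF'⟩

namespace WellFormed

variable {n : ℕ} {σ : State}

theorem walk_ne_nil (h : WellFormed n σ) : σ.walk ≠ [] := fun hnil => by
  simpa [hnil, IsWalkFrom] using h.isWalk

theorem walk_eq_cons (h : WellFormed n σ) {F : Frame} {rest : List Frame}
    (hs : σ.stack = F :: rest) : ∃ t, σ.walk = F.vert :: t := by
  have hok := h.stackOK
  rw [hs] at hok
  obtain ⟨a, t, hat⟩ := List.exists_cons_of_ne_nil h.walk_ne_nil
  exact ⟨t, by rw [hok.1, hat]; rfl⟩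

theorem vert_mem (h : WellFormed n σ) {F : Frame} {rest : List Frame}
    (hs : σ.stack = F :: rest) : F.vert ∈ σ.walk := by
  obtain ⟨t, ht⟩ := h.walk_eq_cons hs
  exact ht ▸ List.mem_cons_self

theorem frameOK_top (h : WellFormed n σ) {F : Frame} {rest : List Frame}
    (hs : σ.stack = F :: rest) : FrameOK n F := by
  have hok := h.stackOK
  rw [hs] at hok
  exact hok.2.1

theorem all_sweeping (h : WellFormed n σ) {u : V} {back : Option V} {todo : List V}
    {rest : List Frame} (hs : σ.stack = ⟨true, u, back, todo⟩ :: rest) :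
    ∀ F ∈ σ.stack, F.sweeping = true := by
  have hph := h.phases
  rw [hs] at hph ⊢
  rintro F (_ | ⟨_, hF⟩)
  · rfl
  · exact (List.pairwise_cons.1 hph).1 F hF rfl

theorem isWalk_cons (h : WellFormed n σ) {F : Frame} {rest : List Frame}
    (hs : σ.stack = F :: rest) {v : V} (hv : LadderAdj n F.vert v) :
    IsWalkFrom n (1, 1) (v :: σ.walk).reverse := by
  rw [List.reverse_cons]
  refine isWalkFrom_concat h.isWalk fun u hu => ?_
  obtain ⟨t, ht⟩ := h.walk_eq_cons hs
  rw [List.getLast?_reverse, ht] at hu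
  cases hu
  exact hv

theorem walkCost_cons (h : WellFormed n σ) {w : V → V → ℕ} (hw : ∀ x y, w x y = w y x)
    {F : Frame} {rest : List Frame} (hs : σ.stack = F :: rest) (v : V) :
    walkCost w (v :: σ.walk) = w F.vert v + walkCost w σ.walk := by
  obtain ⟨t, ht⟩ := h.walk_eq_cons hs
  rw [ht, walkCost_cons_cons, hw]

theorem mem_pop (h : WellFormed n σ) {b : Bool} {u : V} {back : Option V} {rest : List Frame}
    (hs : σ.stack = ⟨b, u, back, []⟩ :: rest) {x : V} :
    x ∈ back.toList ++ σ.walk ↔ x ∈ σ.walk := by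
  rcases back with _ | y
  · simp
  · have hy : y ∈ σ.walk := h.back_mem y (by rw [hs, List.map_cons]; exact List.mem_cons_self)
    simpa using fun hxy => hxy ▸ hy

theorem pop (h : WellFormed n σ) {b : Bool} {u : V} {back : Option V} {rest : List Frame}
    (hs : σ.stack = ⟨b, u, back, []⟩ :: rest) :
    WellFormed n { σ with walk := back.toList ++ σ.walk, stack := rest } := by
  have hok := h.stackOK
  rw [hs] at hok
  obtain ⟨t, ht⟩ := h.walk_eq_cons hs
  refine
    { isWalk := ?_
      inLadder := fun x hx => h.inLadder x ((h.mem_pop hs).1 hx)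
      swept_sub := fun x hx => (h.mem_pop hs).2 (h.swept_sub x hx)
      roots_sub := h.roots_sub
      stackOK := ?_
      back_mem := fun x hx => (h.mem_pop hs).2
        (h.back_mem x (by rw [hs, List.map_cons]; exact List.mem_cons_of_mem _ hx))
      phases := (List.pairwise_cons.1 (hs ▸ h.phases)).2 }
  all_goals rcases back with _ | x
  · simpa using h.isWalk
  · exact h.isWalk_cons hs (hok.2.1.2 x rfl)
  · simpa [ht] using hok.2.2
  · simpa using hok.2.2

theorem stackOK_push (h : WellFormed n σ) {b c : Bool} {u v : V} {back : Option V}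
    {todo : List V} {rest : List Frame} (hs : σ.stack = ⟨b, u, back, v :: todo⟩ :: rest) :
    StackOK n (⟨c, v, some u, neighbors n v⟩ :: ⟨b, u, back, todo⟩ :: rest) v := by
  have hok := h.stackOK
  rw [hs] at hok
  refine ⟨rfl, ⟨fun _ => mem_neighbors.1, fun x hx => ?_⟩, rfl,
    ⟨fun y hy => hok.2.1.1 y (List.mem_cons_of_mem _ hy), hok.2.1.2⟩, hok.2.2⟩
  cases hx
  exact (hok.2.1.1 v List.mem_cons_self).symm

theorem back_mem_push (h : WellFormed n σ) {b c : Bool} {u v : V} {back : Option V}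
    {todo : List V} {rest : List Frame} (hs : σ.stack = ⟨b, u, back, v :: todo⟩ :: rest)
    {x : V} (hx : some x ∈
      (⟨c, v, some u, neighbors n v⟩ :: ⟨b, u, back, todo⟩ :: rest).map Frame.back) :
    x ∈ σ.walk := by
  rcases List.mem_cons.1 hx with hx | hx
  · cases hx
    exact h.vert_mem hs
  · exact h.back_mem x (by rw [hs]; exact hx)

theorem grow (h : WellFormed n σ) {u v : V} {back : Option V} {todo : List V}
    {rest : List Frame} (hs : σ.stack = ⟨false, u, back, v :: todo⟩ :: rest) :
    WellFormed n { σ with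
      walk := v :: σ.walk
      stack := ⟨false, v, some u, neighbors n v⟩ :: ⟨false, u, back, todo⟩ :: rest } := by
  have hadj : LadderAdj n u v := (h.frameOK_top hs).1 v List.mem_cons_self
  exact
    { isWalk := h.isWalk_cons hs hadj
      inLadder := List.forall_mem_cons.2 ⟨hadj.2.1, h.inLadder⟩
      swept_sub := fun x hx => List.mem_cons_of_mem _ (h.swept_sub x hx)
      roots_sub := h.roots_sub
      stackOK := h.stackOK_push hs
      back_mem := fun x hx => List.mem_cons_of_mem _ (h.back_mem_push hs hx)
      phases := List.pairwise_cons.2 ⟨fun _ _ h => absurd h Bool.false_ne_true,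
        List.pairwise_cons.2 (List.pairwise_cons.1 (hs ▸ h.phases))⟩ }

theorem phases_sweep (h : WellFormed n σ) {u v : V} {back : Option V} {todo : List V}
    {rest : List Frame} (hs : σ.stack = ⟨true, u, back, v :: todo⟩ :: rest) :
    List.Pairwise (fun F G => F.sweeping → G.sweeping)
      (⟨true, v, some u, neighbors n v⟩ :: ⟨true, u, back, todo⟩ :: rest) := by
  refine List.pairwise_cons.2 ⟨fun G hG _ => ?_, ?_⟩
  · rcases List.mem_cons.1 hG with rfl | hG
    · rfl
    · exact h.all_sweeping hs G (hs ▸ List.mem_cons_of_mem _ hG)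
  · exact List.pairwise_cons.2 (List.pairwise_cons.1 (hs ▸ h.phases))

theorem sweep (h : WellFormed n σ) {u v : V} {back : Option V} {todo : List V}
    {rest : List Frame} (hs : σ.stack = ⟨true, u, back, v :: todo⟩ :: rest) :
    WellFormed n { σ with
      walk := v :: σ.walk
      swept := insert v σ.swept
      stack := ⟨true, v, some u, neighbors n v⟩ :: ⟨true, u, back, todo⟩ :: rest } := by
  have hadj : LadderAdj n u v := (h.frameOK_top hs).1 v List.mem_cons_self
  exact
    { isWalk := h.isWalk_cons hs hadj
      inLadder := List.forall_mem_cons.2 ⟨hadj.2.1, h.inLadder⟩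
      swept_sub := fun x hx => (Finset.mem_insert.1 hx).elim (· ▸ List.mem_cons_self)
        fun hx => List.mem_cons_of_mem _ (h.swept_sub x hx)
      roots_sub := h.roots_sub.trans (Finset.subset_insert _ _)
      stackOK := h.stackOK_push hs
      back_mem := fun x hx => List.mem_cons_of_mem _ (h.back_mem_push hs hx)
      phases := h.phases_sweep hs }

theorem dive (h : WellFormed n σ) {u v : V} {back : Option V} {todo : List V}
    {rest : List Frame} (hs : σ.stack = ⟨true, u, back, v :: todo⟩ :: rest) :
    WellFormed n {
      walk := v :: σ.walk
      swept := insert v σ.swept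
      roots := insert v σ.roots
      stack := ⟨false, v, none, neighbors n v⟩ :: ⟨true, v, some u, neighbors n v⟩ ::
        ⟨true, u, back, todo⟩ :: rest } := by
  have hadj : LadderAdj n u v := (h.frameOK_top hs).1 v List.mem_cons_self
  exact
    { isWalk := h.isWalk_cons hs hadj
      inLadder := List.forall_mem_cons.2 ⟨hadj.2.1, h.inLadder⟩
      swept_sub := fun x hx => (Finset.mem_insert.1 hx).elim (· ▸ List.mem_cons_self)
        fun hx => List.mem_cons_of_mem _ (h.swept_sub x hx)
      roots_sub := Finset.insert_subset_insert _ h.roots_sub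
      stackOK := ⟨rfl, ⟨fun _ => mem_neighbors.1, nofun⟩, h.stackOK_push hs⟩
      back_mem := fun x hx => List.mem_cons_of_mem _
        (h.back_mem_push (c := true) hs ((List.mem_cons.1 hx).resolve_left (Option.some_ne_none x)))
      phases := List.pairwise_cons.2 ⟨fun _ _ h => absurd h Bool.false_ne_true,
        h.phases_sweep hs⟩ }

theorem skip (h : WellFormed n σ) {b : Bool} {u v : V} {back : Option V} {todo : List V}
    {rest : List Frame} (hs : σ.stack = ⟨b, u, back, v :: todo⟩ :: rest) :
    WellFormed n { σ with stack := ⟨b, u, back, todo⟩ :: rest } := by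
  have hok := h.stackOK
  rw [hs] at hok
  exact
    { h with
      stackOK := ⟨hok.1, ⟨fun y hy => hok.2.1.1 y (List.mem_cons_of_mem _ hy), hok.2.1.2⟩,
        hok.2.2⟩
      back_mem := fun x hx => h.back_mem x (by rw [hs]; exact hx)
      phases := List.pairwise_cons.2 (List.pairwise_cons.1 (hs ▸ h.phases)) }

end WellFormed

namespace Invariant

variable {n k : ℕ} {w : V → V → ℕ} {σ σ' : State}

theorem light_closed (hI : Invariant n k w σ) (hsweep : ∀ F ∈ σ.stack, F.sweeping = true) :
    ∀ u ∈ σ.walk, ∀ v, light n w u v → v ∈ σ.walk := fun u hu v huv => by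
  rcases hI.grow_closed u hu v huv.1 with hdone | ⟨F, hF, hb, -⟩
  · exact hdone huv.2
  · simp [hsweep F hF] at hb

theorem move_step (hI : Invariant n k w σ) (hs : σ.stack ≠ []) : Move n w σ (step n w σ) := by
  obtain ⟨⟨b, u, back, todo⟩, rest, hst⟩ := List.exists_cons_of_ne_nil hs
  rcases todo with _ | ⟨v, todo⟩
  · rw [step, hst]
    exact .pop hst
  have huv : LadderAdj n u v := (hI.frameOK_top hst).1 v List.mem_cons_self
  rw [step, hst]
  cases b
  · dsimp only
    split_ifs with h
    · exact .grow hst h.1 h.2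
    · exact .skip hst fun h1 => not_not.1 fun hv => h ⟨hv, h1⟩
  · dsimp only
    split_ifs with h1 h2
    · exact .sweep hst h1.1 h1.2.1 h1.2.2
    · exact .dive hst h2.1 h2.2
    · refine .skip hst ?_
      by_cases hl : w u v = 1
      · -- the light component is complete once the second search runs
        have hv := hI.light_closed (hI.all_sweeping hst) u (hI.vert_mem hst) v ⟨huv, hl⟩
        exact ⟨hv, fun _ => not_not.1 fun h => h1 ⟨hl, hv, h⟩⟩
      · exact ⟨not_not.1 fun hv => h2 ⟨hl, hv⟩, fun h => absurd h hl⟩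

theorem pop (hI : Invariant n k w σ) (hw : IsWeighting n k w) {b : Bool} {u : V}
    {back : Option V} {rest : List Frame} (hs : σ.stack = ⟨b, u, back, []⟩ :: rest) :
    Invariant n k w { σ with walk := back.toList ++ σ.walk, stack := rest } := by
  have hdone {b u v} (h : Done w σ b u v) :
      Done w { σ with walk := back.toList ++ σ.walk } b u v :=
    Done.mono (σ' := { σ with walk := back.toList ++ σ.walk }) (fun _ hx => (hI.mem_pop hs).2 hx)
      subset_rfl h
  refine
    { toWellFormed := hI.toWellFormed.pop hs
      grow_closed := fun x hx y hxy => (hI.grow_closed x ((hI.mem_pop hs).1 hx) y hxy).imp hdone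
        fun h => pending_of_pop (hs ▸ h)
      sweep_closed := fun x hx y hxy => (hI.sweep_closed x hx y hxy).imp hdone
        fun h => pending_of_pop (hs ▸ h)
      roots_cover := fun x hx => hI.roots_cover x ((hI.mem_pop hs).1 hx)
      roots_pairwise := hI.roots_pairwise
      ledger := ?_ }
  have h := hI.ledger
  simp only [hs, List.map_cons, List.sum_cons, Frame.debt] at h
  rcases back with _ | x
  · simpa using h
  · have hx : x ∈ σ.walk.toFinset := List.mem_toFinset.2 ((hI.mem_pop hs).1 (by simp))
    simp only [Option.toList_some, List.singleton_append, hI.walkCost_cons hw.1 hs,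
      List.toFinset_cons, Finset.insert_eq_of_mem hx]
    simp only [Option.elim] at h
    omega

theorem grow (hI : Invariant n k w σ) (hw : IsWeighting n k w) {u v : V} {back : Option V}
    {todo : List V} {rest : List Frame} (hs : σ.stack = ⟨false, u, back, v :: todo⟩ :: rest)
    (hv : v ∉ σ.walk) (huv : w u v = 1) :
    Invariant n k w { σ with
      walk := v :: σ.walk
      stack := ⟨false, v, some u, neighbors n v⟩ :: ⟨false, u, back, todo⟩ :: rest } := by
  have hadj : LadderAdj n u v := (hI.frameOK_top hs).1 v List.mem_cons_self
  have hsub : ∀ x ∈ σ.walk, x ∈ v :: σ.walk := fun x => List.mem_cons_of_mem v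
  refine
    { toWellFormed := hI.toWellFormed.grow hs
      grow_closed := fun x hx y hxy => ?_
      sweep_closed := fun x hx y hxy => done_or_pending_of_advance hsub subset_rfl hs
        (List.subset_cons_self _ _) (fun _ => List.mem_cons_self) (hI.sweep_closed x hx y hxy)
      roots_cover := fun x hx => ?_
      roots_pairwise := hI.roots_pairwise
      ledger := ?_ }
  · rcases List.mem_cons.1 hx with rfl | hx
    · exact .inr ⟨_, List.mem_cons_self, rfl, rfl, mem_neighbors.2 hxy⟩
    · exact done_or_pending_of_advance hsub subset_rfl hs (List.subset_cons_self _ _)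
        (fun _ => List.mem_cons_self) (hI.grow_closed x hx y hxy)
  · rcases List.mem_cons.1 hx with rfl | hx
    · obtain ⟨r, hr, hru⟩ := hI.roots_cover u (hI.vert_mem hs)
      exact ⟨r, hr, hru.tail ⟨hadj, huv⟩⟩
    · exact hI.roots_cover x hx
  · have h := hI.ledger
    simp only [hs, List.map_cons, List.sum_cons, Frame.debt, Option.elim] at h
    simp only [hI.walkCost_cons hw.1 hs, List.toFinset_cons, List.map_cons, List.sum_cons,
      Frame.debt, Option.elim, hw.1 v u, huv,
      Finset.card_insert_of_notMem (mt List.mem_toFinset.1 hv)]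
    omega

theorem sweep (hI : Invariant n k w σ) (hw : IsWeighting n k w) {u v : V} {back : Option V}
    {todo : List V} {rest : List Frame} (hs : σ.stack = ⟨true, u, back, v :: todo⟩ :: rest)
    (huv : w u v = 1) (hv : v ∈ σ.walk) (hv' : v ∉ σ.swept) :
    Invariant n k w { σ with
      walk := v :: σ.walk
      swept := insert v σ.swept
      stack := ⟨true, v, some u, neighbors n v⟩ :: ⟨true, u, back, todo⟩ :: rest } := by
  have hsub : ∀ x ∈ σ.walk, x ∈ v :: σ.walk := fun x => List.mem_cons_of_mem v
  have hmem : ∀ x ∈ v :: σ.walk, x ∈ σ.walk := fun x hx =>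
    (List.mem_cons.1 hx).elim (· ▸ hv) id
  refine
    { toWellFormed := hI.toWellFormed.sweep hs
      grow_closed := fun x hx y hxy => .inl fun h =>
        hsub y (hI.light_closed (hI.all_sweeping hs) x (hmem x hx) y ⟨hxy, h⟩)
      sweep_closed := fun x hx y hxy => ?_
      roots_cover := fun x hx => hI.roots_cover x (hmem x hx)
      roots_pairwise := hI.roots_pairwise
      ledger := ?_ }
  · rcases Finset.mem_insert.1 hx with rfl | hx
    · exact .inr ⟨_, List.mem_cons_self, rfl, rfl, mem_neighbors.2 hxy⟩
    · exact done_or_pending_of_advance hsub (Finset.subset_insert _ _) hs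
        (List.subset_cons_self _ _) ⟨List.mem_cons_self, fun _ => Finset.mem_insert_self _ _⟩
        (hI.sweep_closed x hx y hxy)
  · have h := hI.ledger
    simp only [hs, List.map_cons, List.sum_cons, Frame.debt, Option.elim] at h
    simp only [hI.walkCost_cons hw.1 hs, List.toFinset_cons, List.map_cons, List.sum_cons,
      Frame.debt, Option.elim, hw.1 v u, huv, Finset.card_insert_of_notMem hv',
      Finset.insert_eq_of_mem (List.mem_toFinset.2 hv)]
    omega

/-- The light components of the roots are complete, so a vertex outside `walk` lies in none
of them. -/
theorem roots_pairwise_insert (hI : Invariant n k w σ) (hw : IsWeighting n k w)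
    (hsweep : ∀ F ∈ σ.stack, F.sweeping = true) {v : V} (hv : v ∉ σ.walk) :
    ((insert v σ.roots : Finset V) : Set V).Pairwise
      fun x y => ¬ ReflTransGen (light n w) x y := by
  have := light_symm hw
  rw [Finset.coe_insert]
  refine hI.roots_pairwise.insert fun r hr _ => ?_
  have hrv : ¬ ReflTransGen (light n w) r v := fun h =>
    hv (mem_of_reflTransGen (hI.light_closed hsweep) h (hI.swept_sub r (hI.roots_sub hr)))
  exact ⟨fun h => hrv (Std.Symm.symm _ _ h), hrv⟩

theorem dive (hI : Invariant n k w σ) (hw : IsWeighting n k w) {u v : V} {back : Option V}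
    {todo : List V} {rest : List Frame} (hs : σ.stack = ⟨true, u, back, v :: todo⟩ :: rest)
    (huv : w u v ≠ 1) (hv : v ∉ σ.walk) :
    Invariant n k w {
      walk := v :: σ.walk
      swept := insert v σ.swept
      roots := insert v σ.roots
      stack := ⟨false, v, none, neighbors n v⟩ :: ⟨true, v, some u, neighbors n v⟩ ::
        ⟨true, u, back, todo⟩ :: rest } := by
  have hsub : ∀ x ∈ σ.walk, x ∈ v :: σ.walk := fun x => List.mem_cons_of_mem v
  have hsweep := hI.all_sweeping hs
  have hv' : v ∉ σ.swept := fun h => hv (hI.swept_sub v h)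
  refine
    { toWellFormed := hI.toWellFormed.dive hs
      grow_closed := fun x hx y hxy => ?_
      sweep_closed := fun x hx y hxy => ?_
      roots_cover := fun x hx => ?_
      roots_pairwise := hI.roots_pairwise_insert hw hsweep hv
      ledger := ?_ }
  · rcases List.mem_cons.1 hx with rfl | hx
    · exact .inr ⟨_, List.mem_cons_self, rfl, rfl, mem_neighbors.2 hxy⟩
    · exact .inl fun h => hsub y (hI.light_closed hsweep x hx y ⟨hxy, h⟩)
  · rcases Finset.mem_insert.1 hx with rfl | hx
    · exact .inr ⟨_, List.mem_cons_of_mem _ List.mem_cons_self, rfl, rfl, mem_neighbors.2 hxy⟩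
    · exact done_or_pending_of_advance hsub (Finset.subset_insert _ _) hs
        (fun F hF => List.mem_cons_of_mem _ (List.mem_cons_of_mem _ hF))
        ⟨List.mem_cons_self, fun h => absurd h huv⟩ (hI.sweep_closed x hx y hxy)
  · rcases List.mem_cons.1 hx with rfl | hx
    · exact ⟨x, Finset.mem_insert_self _ _, .refl⟩
    · obtain ⟨r, hr, hrx⟩ := hI.roots_cover x hx
      exact ⟨r, Finset.mem_insert_of_mem hr, hrx⟩
  · have h := hI.ledger
    have hk : w u v = k := (hw.2 u v ((hI.frameOK_top hs).1 v List.mem_cons_self)).resolve_left huv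
    simp only [hs, List.map_cons, List.sum_cons, Frame.debt, Option.elim] at h
    simp only [hI.walkCost_cons hw.1 hs, List.toFinset_cons, List.map_cons, List.sum_cons,
      Frame.debt, Option.elim, hw.1 v u, hk, Finset.card_insert_of_notMem hv',
      Finset.card_insert_of_notMem fun h => hv' (hI.roots_sub h),
      Finset.card_insert_of_notMem (mt List.mem_toFinset.1 hv), mul_add]
    omega

theorem skip (hI : Invariant n k w σ) {b : Bool} {u v : V} {back : Option V} {todo : List V}
    {rest : List Frame} (hs : σ.stack = ⟨b, u, back, v :: todo⟩ :: rest)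
    (hdone : Done w σ b u v) :
    Invariant n k w { σ with stack := ⟨b, u, back, todo⟩ :: rest } where
  toWellFormed := hI.toWellFormed.skip hs
  grow_closed x hx y hxy := done_or_pending_of_advance (σ := σ) (fun _ => id) subset_rfl hs
    (List.Subset.refl _) hdone (hI.grow_closed x hx y hxy)
  sweep_closed x hx y hxy := done_or_pending_of_advance (σ := σ) (fun _ => id) subset_rfl hs
    (List.Subset.refl _) hdone (hI.sweep_closed x hx y hxy)
  roots_cover := hI.roots_cover
  roots_pairwise := hI.roots_pairwise
  ledger := by simpa [hs, Frame.debt] using hI.ledger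

theorem move (hI : Invariant n k w σ) (hw : IsWeighting n k w) (hm : Move n w σ σ') :
    Invariant n k w σ' := by
  cases hm with
  | pop hs => exact hI.pop hw hs
  | grow hs hv huv => exact hI.grow hw hs hv huv
  | sweep hs huv hv hv' => exact hI.sweep hw hs huv hv hv'
  | dive hs huv hv => exact hI.dive hw hs huv hv
  | skip hs hdone => exact hI.skip hs hdone

end Invariant

namespace Invariant

variable {n k : ℕ} {w : V → V → ℕ} {σ σ' : State}

theorem step (hI : Invariant n k w σ) (hw : IsWeighting n k w) :
    Invariant n k w (step n w σ) := by
  by_cases hs : σ.stack = []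
  · rwa [step_of_stack_eq_nil hs]
  · exact hI.move hw (hI.move_step hs)

theorem iterate (hI : Invariant n k w σ) (hw : IsWeighting n k w) (m : ℕ) :
    Invariant n k w ((LadderExploration.step n w)^[m] σ) :=
  Function.Iterate.rec (Invariant n k w) hI (fun _ h => h.step hw) m

theorem init (hn : 1 ≤ n) : Invariant n k w (init n) where
  isWalk := ⟨rfl, List.isChain_singleton _⟩
  inLadder := by simpa [LadderExploration.init, InLadder] using hn
  swept_sub := by simp [LadderExploration.init]
  roots_sub := subset_rfl
  stackOK :=
    ⟨rfl, ⟨fun _ => mem_neighbors.1, nofun⟩, rfl, ⟨fun _ => mem_neighbors.1, nofun⟩, trivial⟩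
  back_mem := by simp [LadderExploration.init]
  phases := by simp [LadderExploration.init]
  grow_closed u hu v huv := by
    obtain rfl : u = (1, 1) := List.mem_singleton.1 hu
    exact .inr ⟨_, List.mem_cons_self, rfl, rfl, mem_neighbors.2 huv⟩
  sweep_closed u hu v huv := by
    obtain rfl : u = (1, 1) := Finset.mem_singleton.1 hu
    exact .inr ⟨_, List.mem_cons_of_mem _ List.mem_cons_self, rfl, rfl, mem_neighbors.2 huv⟩
  roots_cover u hu := ⟨u, by simpa [LadderExploration.init] using hu, .refl⟩
  roots_pairwise := by simp [LadderExploration.init]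
  ledger := by simp [LadderExploration.init, walkCost, Frame.debt]

theorem card_swept_le (hI : Invariant n k w σ) :
    σ.swept.card ≤ σ.walk.toFinset.card ∧ σ.walk.toFinset.card ≤ 2 * n :=
  ⟨Finset.card_le_card fun v hv => List.mem_toFinset.2 (hI.swept_sub v hv),
    card_le_of_forall_inLadder fun v hv => hI.inLadder v (List.mem_toFinset.1 hv)⟩

theorem potential_lt (hI : Invariant n k w σ) (hI' : Invariant n k w σ') (hm : Move n w σ σ') :
    potential n σ' < potential n σ := by
  have hcard := hI.card_swept_le
  have hcard' := hI'.card_swept_le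
  have hwalk : σ.walk.toFinset.card ≤ σ'.walk.toFinset.card := Finset.card_le_card fun v hv =>
    List.mem_toFinset.2 (hm.walk_suffix.subset (List.mem_toFinset.1 hv))
  have hsize (v : V) := length_neighbors_le n v
  cases hm with
  | pop hs =>
    simp only [potential, hs, List.map_cons, List.sum_cons, Frame.size] at hwalk hcard' ⊢
    omega
  | @grow u back v todo rest hs hv =>
    have hv := Finset.card_insert_of_notMem (mt List.mem_toFinset.1 hv)
    have := hsize v
    simp only [potential, hs, List.map_cons, List.sum_cons, Frame.size, List.length_cons,
      List.toFinset_cons] at hcard' hv ⊢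
    omega
  | @sweep u back v todo rest hs _ hv hv' =>
    have hv' := Finset.card_insert_of_notMem hv'
    have := hsize v
    simp only [potential, hs, List.map_cons, List.sum_cons, Frame.size, List.length_cons]
      at hwalk hcard' hv' ⊢
    omega
  | @dive u back v todo rest hs _ hv =>
    have hv' := Finset.card_insert_of_notMem fun h => hv (hI.swept_sub v h)
    have hv := Finset.card_insert_of_notMem (mt List.mem_toFinset.1 hv)
    have := hsize v
    simp only [potential, hs, List.map_cons, List.sum_cons, Frame.size, List.length_cons,
      List.toFinset_cons] at hcard' hv hv' ⊢
    omega
  | skip hs =>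
    simp only [potential, hs, List.map_cons, List.sum_cons, Frame.size, List.length_cons]
    omega

theorem stack_iterate_eq_nil (hI : Invariant n k w σ) (hw : IsWeighting n k w) {m : ℕ}
    (hm : potential n σ ≤ m) : ((LadderExploration.step n w)^[m] σ).stack = [] := by
  induction m generalizing σ with
  | zero =>
    rcases hs : σ.stack with _ | ⟨F, rest⟩
    · exact hs
    · simp [potential, hs, Frame.size] at hm
  | succ m ih =>
    rw [Function.iterate_succ_apply]
    by_cases hs : σ.stack = []
    · rwa [step_of_stack_eq_nil hs, Function.iterate_fixed (step_of_stack_eq_nil hs)]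
    · have hmove := hI.move_step hs
      exact ih (hI.move hw hmove) (by have := hI.potential_lt (hI.move hw hmove) hmove; omega)

theorem mem_walk_of_stack_eq_nil (hI : Invariant n k w σ) (hs : σ.stack = []) {v : V}
    (hv : InLadder n v) : v ∈ σ.walk := by
  have hnil {b u v} : ¬ Pending σ.stack b u v := by simp [hs, Pending]
  have hswept : ∀ x ∈ σ.swept, ∀ y, light n w x y → y ∈ σ.swept := fun x hx y hxy =>
    ((hI.sweep_closed x hx y hxy.1).resolve_right hnil).2 hxy.2
  have hwalk_swept : ∀ x ∈ σ.walk, x ∈ σ.swept := fun x hx => by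
    obtain ⟨r, hr, hrx⟩ := hI.roots_cover x hx
    exact mem_of_reflTransGen (S := {x | x ∈ σ.swept}) hswept hrx (hI.roots_sub hr)
  have hclosed : ∀ x ∈ σ.walk, ∀ y, LadderAdj n x y → y ∈ σ.walk := fun x hx y hxy =>
    ((hI.sweep_closed x (hwalk_swept x hx) y hxy).resolve_right hnil).1
  have hstart : ((1, 1) : V) ∈ σ.walk :=
    List.mem_reverse.1 (List.mem_of_mem_head? hI.isWalk.1)
  exact mem_of_reflTransGen (S := {x | x ∈ σ.walk}) hclosed (reflTransGen_ladderAdj hv) hstart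

theorem walkCost_add_le (hI : Invariant n k w σ) (hs : σ.stack = []) :
    walkCost w σ.walk + 4 + 2 * k ≤ 8 * n + 2 * k * σ.roots.card := by
  have := hI.card_swept_le
  have := hI.ledger
  simp only [hs, List.map_nil, List.sum_nil] at this
  omega

end Invariant

section Explore

variable {n k : ℕ} {w w' : V → V → ℕ}

theorem exists_final_state (hw : IsWeighting n k w) (hn : 1 ≤ n) :
    ∃ σ, Invariant n k w σ ∧ σ.stack = [] ∧ explore n w = σ.walk.reverse :=
  ⟨_, (Invariant.init hn).iterate hw _, (Invariant.init hn).stack_iterate_eq_nil hw le_rfl, rfl⟩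

theorem isExploration_explore (hw : IsWeighting n k w) (hn : 1 ≤ n) :
    IsExploration n (explore n w) := by
  obtain ⟨σ, hI, hs, he⟩ := exists_final_state hw hn
  rw [he]
  exact ⟨hI.isWalk, fun v hv => List.mem_reverse.2 (hI.mem_walk_of_stack_eq_nil hs hv)⟩

theorem le_four_mul_of_bounds {c L r : ℕ} (hk : 2 ≤ k)
    (hc : c + 4 + 2 * k ≤ 8 * n + 2 * k * r) (hL : 2 * n - 1 + (k - 1) * (r - 1) ≤ L) :
    c ≤ 4 * L := by
  rcases r with _ | s
  · omega
  · have : 2 * k * s ≤ 4 * ((k - 1) * s) := by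
      rw [← mul_assoc]
      exact Nat.mul_le_mul_right s (by omega)
    rw [mul_add] at hc
    simp only [Nat.add_sub_cancel] at hL
    omega

theorem walkCost_explore_le (hw : IsWeighting n k w) (hn : 1 ≤ n) (hk : 2 ≤ k) {q : List V}
    (hq : IsExploration n q) : walkCost w (explore n w) ≤ 4 * walkCost w q := by
  obtain ⟨σ, hI, hs, he⟩ := exists_final_state hw hn
  rw [he, walkCost_reverse hw.1]
  exact le_four_mul_of_bounds hk (hI.walkCost_add_le hs)
    (le_walkCost_of_isExploration hw (by omega) hq hI.roots_pairwise
      fun x hx => hI.inLadder x (hI.swept_sub x (hI.roots_sub hx)))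

theorem step_congr {σ : State} (hok : StackOK n σ.stack (σ.walk.headD (1, 1)))
    (h : ∀ v, LadderAdj n (σ.walk.headD (1, 1)) v →
      w (σ.walk.headD (1, 1)) v = w' (σ.walk.headD (1, 1)) v) :
    step n w σ = step n w' σ := by
  rcases hs : σ.stack with _ | ⟨⟨b, u, back, _ | ⟨v, todo⟩⟩, rest⟩
  · simp [step, hs]
  · simp [step, hs]
  · rw [hs] at hok
    have huv := h v (hok.1 ▸ hok.2.1.1 v List.mem_cons_self)
    rw [← hok.1] at huv
    cases b <;> simp only [step, hs, huv]

theorem explore_take_eq (hw : IsWeighting n k w) (hn : 1 ≤ n) (t : ℕ)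
    (hagree : ∀ u v, LadderAdj n u v →
      (u ∈ (explore n w).take (t + 1) ∨ v ∈ (explore n w).take (t + 1)) → w u v = w' u v) :
    (explore n w).take (t + 2) = (explore n w').take (t + 2) := by
  refine take_iterate_eq (tr := fun σ : State => σ.walk.reverse) (walk_reverse_prefix_step n w)
    (walk_reverse_prefix_step n w') fun m hm hlen => ?_
  have hI : Invariant n k w ((step n w)^[m] (init n)) := (Invariant.init hn).iterate hw m
  have hpre : ((step n w)^[m] (init n)).walk.reverse <+: (explore n w).take (t + 1) := by
    refine List.prefix_take_iff.2 ⟨?_, hlen⟩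
    rw [explore, ← Nat.sub_add_cancel hm.le, Function.iterate_add_apply]
    exact walk_reverse_prefix_iterate n w _ _
  refine step_congr hI.stackOK fun v hv => hagree _ v hv (.inl (hpre.subset ?_))
  obtain ⟨a, l, hal⟩ := List.exists_cons_of_ne_nil hI.walk_ne_nil
  simp [hal]

end Explore

end LadderExploration

/-- Theorem 3: there is a 4-competitive deterministic online strategy for
exploring weighted ladder grids with weights in `{1,k}`. -/
theorem ladder_four_competitive (k : ℕ) (hk : 5 ≤ k) :
    ∃ α : ℕ, ∀ n : ℕ, 1 ≤ n →
      ∃ A : (V → V → ℕ) → List V, OnlineStrategy n k A ∧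
        ∀ w, IsWeighting n k w →
          walkCost w (A w) ≤ 4 * OPT n w + α := by
  refine ⟨0, fun n hn => ⟨LadderExploration.explore n,
    ⟨fun w hw => ?_, fun w w' hw _ t h => ?_⟩, fun w hw => ?_⟩⟩
  · exact LadderExploration.isExploration_explore hw hn
  · exact LadderExploration.explore_take_eq hw hn t h
  · exact LadderExploration.le_mul_OPT ⟨_, LadderExploration.isExploration_explore hw hn⟩
      fun q hq => LadderExploration.walkCost_explore_le hw hn (by omega) hq
end
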